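/- arXiv:1109.4277 — 2 statements merged into one kernel-verified Lean document; each statement's English description precedes it below -/
import Mathlib

section
/- Let 𝒜 be a countable Boolean subalgebra of the powerset of ℕ and let ℱ ⊆ 𝒜 be a partial non-principal ultrafilter for 𝒜. Then for every countable Boolean subalgebra 𝒜̃ ⊇ 𝒜 there exists a partial non-principal ultrafilter ℱ̃ for 𝒜̃ with ℱ̃ ⊇ ℱ. -/
/-- A Boolean subalgebra of the powerset of ℕ. -/
def IsSubalgebra (A : Set (Set ℕ)) : Prop :=
  ∅ ∈ A ∧ Set.univ ∈ A ∧ (∀ X ∈ A, Xᶜ ∈ A) ∧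
  (∀ X ∈ A, ∀ Y ∈ A, X ∪ Y ∈ A) ∧ (∀ X ∈ A, ∀ Y ∈ A, X ∩ Y ∈ A)

/-- A partial non-principal ultrafilter for an algebra A. -/
def IsPartialUltrafilter (A F : Set (Set ℕ)) : Prop :=
  F ⊆ A ∧
  (∀ X ∈ A, X ∈ F ∨ Xᶜ ∈ F) ∧
  (∀ X ∈ A, ∀ Y ∈ A, X ∩ Y ∈ F → Y ∈ F) ∧
  (∀ X ∈ F, ∀ Y ∈ F, X ∩ Y ∈ A → X ∩ Y ∈ F) ∧
  (∀ X ∈ F, X.Infinite)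

/-!
Since `𝒜` is closed under intersections, `ℱ` is closed under finite intersections, so every
finite intersection of members of `ℱ` is infinite. Hence `ℱ` together with the cofinite sets
has the finite intersection property and extends to a non-principal ultrafilter `U` on ℕ.
The trace `{X ∈ 𝒜̃ | X ∈ U}` is then a partial non-principal ultrafilter for `𝒜̃` containing `ℱ`.
-/

open Filter Set

theorem Filter.exists_ultrafilter_le_cofinite {α : Type*} {F : Set (Set α)}
    (hF : ∀ t ⊆ F, t.Finite → (⋂₀ t).Infinite) :
    ∃ U : Ultrafilter α, (U : Filter α) ≤ cofinite ∧ F ⊆ (U : Filter α).sets := by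
  have : (generate F ⊓ cofinite).NeBot := by
    refine inf_neBot_iff.2 fun s hs s' hs' => ?_
    obtain ⟨t, htF, ht, hts⟩ := mem_generate_iff.1 hs
    obtain ⟨x, hx, hx'⟩ := ((hF t htF ht).sdiff (mem_cofinite.1 hs')).nonempty
    exact ⟨x, hts hx, not_not.1 hx'⟩
  obtain ⟨U, hU⟩ := Ultrafilter.exists_le (generate F ⊓ cofinite)
  exact ⟨U, hU.trans inf_le_right, le_generate_iff.1 (hU.trans inf_le_left)⟩

theorem Ultrafilter.infinite_of_le_cofinite {α : Type*} {U : Ultrafilter α}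
    (hU : (U : Filter α) ≤ cofinite) {s : Set α} (hs : s ∈ U) : s.Infinite :=
  frequently_cofinite_mem_iff_infinite.1 <|
    (Eventually.frequently (f := (U : Filter α)) hs).filter_mono hU

namespace IsPartialUltrafilter

variable {A F : Set (Set ℕ)}

theorem univ_mem (hF : IsPartialUltrafilter A F) (huniv : univ ∈ A) : univ ∈ F :=
  (hF.2.1 _ huniv).resolve_right fun h => by simpa using hF.2.2.2.2 _ h

theorem sInter_mem (hF : IsPartialUltrafilter A F) (huniv : univ ∈ A)
    (hinter : ∀ X ∈ A, ∀ Y ∈ A, X ∩ Y ∈ A) {t : Set (Set ℕ)} (ht : t.Finite) (htF : t ⊆ F) :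
    ⋂₀ t ∈ F := by
  induction t, ht using Set.Finite.induction_on with
  | empty => simpa using hF.univ_mem huniv
  | @insert X t _ _ ih =>
    have hX : X ∈ F := htF (mem_insert X t)
    have ht : ⋂₀ t ∈ F := ih ((subset_insert X t).trans htF)
    rw [sInter_insert]
    exact hF.2.2.2.1 X hX _ ht (hinter X (hF.1 hX) _ (hF.1 ht))

end IsPartialUltrafilter

theorem isPartialUltrafilter_trace {A : Set (Set ℕ)} (hcompl : ∀ X ∈ A, Xᶜ ∈ A)
    {U : Ultrafilter ℕ} (hU : (U : Filter ℕ) ≤ cofinite) :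
    IsPartialUltrafilter A {X ∈ A | X ∈ U} :=
  ⟨sep_subset A _,
   fun X hX => (U.mem_or_compl_mem X).imp (⟨hX, ·⟩) (⟨hcompl X hX, ·⟩),
   fun _ _ _ hY hXY => ⟨hY, mem_of_superset hXY.2 inter_subset_right⟩,
   fun _ hX _ hY hXY => ⟨hXY, inter_mem hX.2 hY.2⟩,
   fun _ hX => U.infinite_of_le_cofinite hU hX.2⟩

theorem partial_ultrafilter_extension_general (A F Atil : Set (Set ℕ))
    (hA : IsSubalgebra A) (hF : IsPartialUltrafilter A F)
    (hAtil : IsSubalgebra Atil) (hsub : A ⊆ Atil) :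
    ∃ Ftil : Set (Set ℕ), F ⊆ Ftil ∧ IsPartialUltrafilter Atil Ftil := by
  obtain ⟨-, huniv, -, -, hinter⟩ := hA
  have hFinite : ∀ t ⊆ F, t.Finite → (⋂₀ t).Infinite := fun t htF ht =>
    hF.2.2.2.2 _ (hF.sInter_mem huniv hinter ht htF)
  obtain ⟨U, hUcof, hFU⟩ := exists_ultrafilter_le_cofinite hFinite
  exact ⟨{X ∈ Atil | X ∈ U}, fun X hX => ⟨hsub (hF.1 hX), hFU hX⟩,
    isPartialUltrafilter_trace hAtil.2.2.1 hUcof⟩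

theorem partial_ultrafilter_extension (A F Atil : Set (Set ℕ))
    (hAc : A.Countable) (hA : IsSubalgebra A) (hF : IsPartialUltrafilter A F)
    (hAtilc : Atil.Countable) (hAtil : IsSubalgebra Atil) (hsub : A ⊆ Atil) :
    ∃ Ftil : Set (Set ℕ), F ⊆ Ftil ∧ IsPartialUltrafilter Atil Ftil :=
  partial_ultrafilter_extension_general A F Atil hA hF hAtil hsub
end

section
/- Let ℱ be a partial non-principal ultrafilter for a Boolean subalgebra 𝒜 of subsets of ℕ, and let (Ã_i)_{i∈ℕ} be a sequence of subsets of ℕ. Define, for a finite binary string x ∈ 2^{<ℕ}, the set Ã^x := ⋂_{i < |x|} B_i where B_i = Ã_i if x_i = 0 and B_i = ℕ∖Ã_i if x_i = 1. Consider the tree T of binary strings x such that Ã^x ∩ F is infinite for every F ∈ ℱ. Then T is an infinite tree. -/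
/-- The set Atil^x for a finite binary string x. -/
def AtX (Atil : ℕ → Set ℕ) (x : List Bool) : Set ℕ :=
  ⋂ i ∈ Finset.range x.length, if x.getD i false = false then Atil i else (Atil i)ᶜ


lemma AtX_nil (Atil : ℕ → Set ℕ) : AtX Atil [] = Set.univ := by
  simp [AtX]

lemma AtX_append_singleton (Atil : ℕ → Set ℕ) (x : List Bool) (b : Bool) :
    AtX Atil (x ++ [b]) =
      AtX Atil x ∩ if b = false then Atil x.length else (Atil x.length)ᶜ := by
  unfold AtX
  rw [List.length_append, List.length_singleton, Finset.range_add_one,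
    Finset.set_biInter_insert, Set.inter_comm]
  congr 1
  · refine Set.iInter₂_congr fun i hi => ?_
    rw [List.getD_append _ _ _ _ (Finset.mem_range.mp hi)]
  · simp [List.getD_eq_getElem?_getD]

lemma AtX_append_false_union_append_true (Atil : ℕ → Set ℕ) (x : List Bool) :
    AtX Atil (x ++ [false]) ∪ AtX Atil (x ++ [true]) = AtX Atil x := by
  simp only [AtX_append_singleton, if_pos, Bool.true_eq_false, if_false,
    ← Set.inter_union_distrib_left, Set.union_compl_self, Set.inter_univ]

lemma IsPartialUltrafilter.inter_mem {A F : Set (Set ℕ)} (hA : IsSubalgebra A)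
    (hF : IsPartialUltrafilter A F) {X Y : Set ℕ} (hX : X ∈ F) (hY : Y ∈ F) :
    X ∩ Y ∈ F :=
  hF.2.2.2.1 X hX Y hY (hA.2.2.2.2 X (hF.1 hX) Y (hF.1 hY))

lemma forall_inter_infinite_or_of_union {α : Type*} {F : Set (Set α)}
    (hF : ∀ X ∈ F, ∀ Y ∈ F, X ∩ Y ∈ F) {S T : Set α}
    (h : ∀ G ∈ F, ((S ∪ T) ∩ G).Infinite) :
    (∀ G ∈ F, (S ∩ G).Infinite) ∨ ∀ G ∈ F, (T ∩ G).Infinite := by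
  by_contra! ⟨⟨G₀, hG₀, hS⟩, ⟨G₁, hG₁, hT⟩⟩
  refine h (G₀ ∩ G₁) (hF G₀ hG₀ G₁ hG₁) ((hS.union hT).subset ?_)
  rintro a ⟨ha | ha, haG₀, haG₁⟩
  · exact Or.inl ⟨ha, haG₀⟩
  · exact Or.inr ⟨ha, haG₁⟩

theorem tree_is_infinite (A F : Set (Set ℕ)) (hA : IsSubalgebra A)
    (hF : IsPartialUltrafilter A F) (Atil : ℕ → Set ℕ) :
    ∀ n : ℕ, ∃ x : List Bool, x.length = n ∧
      ∀ G ∈ F, (AtX Atil x ∩ G).Infinite := by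
  intro n
  induction n with
  | zero =>
    exact ⟨[], rfl, fun G hG => by simpa [AtX_nil] using hF.2.2.2.2 G hG⟩
  | succ n ih =>
    obtain ⟨x, rfl, hx⟩ := ih
    rw [← AtX_append_false_union_append_true] at hx
    rcases forall_inter_infinite_or_of_union (fun X hX Y hY => hF.inter_mem hA hX hY) hx
      with h | h
    · exact ⟨x ++ [false], by simp, h⟩
    · exact ⟨x ++ [true], by simp, h⟩
end
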